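/- Let a, m > 0 and suppose one of the following holds: (C1) m < 1 and a < 1; (C2) m < 1, a ≥ 1 and m ≤ 1/a; (C3) m ≥ 1, a < 1 and m ≤ 1/a. Then: (R1) if −1 < ρ < (a+m)/2, g attains its unique minimum at t₀ = t₀⁽⁰⁾ = sqrt((1+a²−2aρ)/(1+m²−2mρ)), the essential index set of P_Σ(α̃+μ̃t₀) is I = {1,2}, the weakly essential set is K = ∅, inf g = g₀(t₀⁽⁰⁾), and g̃ = g₀''(t₀⁽⁰⁾). (R2) if ρ = (a+m)/2 (and ρ < 1), then t₀ = t₀⁽⁰⁾ = t₀⁽¹⁾ = 1, I = {1}, K = {2}, inf g = g₀(t₀⁽⁰⁾) = g₁(1) = 4, and g̃ = g₁''(1) = 2. (R3) if (a+m)/2 < ρ < 1, then t₀ = 1, I = {1}, K = ∅, inf g = 4, and g̃ = 2. -/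

import Mathlib

open MeasureTheory ProbabilityTheory Filter Asymptotics Matrix
open scoped ENNReal NNReal

noncomputable section

variable {Ω : Type*} [MeasureSpace Ω]

/-- `W` is a standard one-dimensional Brownian motion started at `0`:
continuous paths, `W 0 = 0`, Gaussian increments `W t - W s ∼ N(0, t-s)`,
and independent increments. -/
def IsStdBM (W : ℝ → Ω → ℝ) : Prop :=
  (∀ ω, W 0 ω = 0) ∧
  (∀ ω, Continuous fun t => W t ω) ∧
  (∀ t, Measurable (W t)) ∧
  (∀ s t : ℝ, 0 ≤ s → s ≤ t →
    Measure.map (fun ω => W t ω - W s ω) volume = gaussianReal 0 (Real.toNNReal (t - s))) ∧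
  (∀ n : ℕ, ∀ t : ℕ → ℝ, Monotone t → 0 ≤ t 0 →
    iIndepFun
      (fun (k : Fin n) ω => W (t (k + 1)) ω - W (t k) ω) volume)

/-- `B` is a standard `d`-dimensional Brownian motion with independent coordinates. -/
def IsStdBMd (d : ℕ) (B : ℝ → Ω → Fin d → ℝ) : Prop :=
  (∀ i : Fin d, IsStdBM fun t ω => B t ω i) ∧
  iIndepFun (fun (i : Fin d) ω => fun t => B t ω i) volume

/-- The quadratic form `x ↦ xᵀ M x`. -/
def qf {d : ℕ} (M : Matrix (Fin d) (Fin d) ℝ) (x : Fin d → ℝ) : ℝ := x ⬝ᵥ M.mulVec x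

/-- The sub-block `M_{I J}` of a matrix. -/
def sub {d : ℕ} (M : Matrix (Fin d) (Fin d) ℝ) (I J : Finset (Fin d)) : Matrix ↥I ↥J ℝ :=
  M.submatrix Subtype.val Subtype.val

/-- The subvector `b_I`. -/
def subv {d : ℕ} (b : Fin d → ℝ) (I : Finset (Fin d)) : ↥I → ℝ := fun i => b i

/-- The vector `M_{II}⁻¹ b_I`. -/
def wvec {d : ℕ} (M : Matrix (Fin d) (Fin d) ℝ) (I : Finset (Fin d)) (b : Fin d → ℝ) : ↥I → ℝ :=
  (sub M I I)⁻¹.mulVec (subv b I)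

/-- The scalar `b_Iᵀ M_{II}⁻¹ b_I`. -/
def subQF {d : ℕ} (M : Matrix (Fin d) (Fin d) ℝ) (I : Finset (Fin d)) (b : Fin d → ℝ) : ℝ :=
  subv b I ⬝ᵥ wvec M I b

/-- The `j`-th entry of `M_{•I} M_{II}⁻¹ b_I`. -/
def rowdot {d : ℕ} (M : Matrix (Fin d) (Fin d) ℝ) (I : Finset (Fin d)) (b : Fin d → ℝ)
    (j : Fin d) : ℝ := ∑ i : ↥I, M j i * wvec M I b i

/-- The Schur-complement block `D_{KK} = M_{KK} - M_{KI} M_{II}⁻¹ M_{IK}`. -/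
def Dmat {d : ℕ} (M : Matrix (Fin d) (Fin d) ℝ) (I K : Finset (Fin d)) : Matrix ↥K ↥K ℝ :=
  sub M K K - sub M K I * (sub M I I)⁻¹ * sub M I K

/-- `g(t) = (1/t) · inf_{x ≥ α + μ t} xᵀ M⁻¹ x`. -/
def gfun {d : ℕ} (M : Matrix (Fin d) (Fin d) ℝ) (αv μv : Fin d → ℝ) (t : ℝ) : ℝ :=
  (1 / t) * sInf ((fun x => qf M⁻¹ x) '' {x | ∀ i, αv i + μv i * t ≤ x i})

/-- `x` solves the quadratic programming problem `P_M(b)`: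
it minimises `yᵀ M⁻¹ y` over `{y : y ≥ b}` (componentwise). -/
def Minimizes {d : ℕ} (M : Matrix (Fin d) (Fin d) ℝ) (b x : Fin d → ℝ) : Prop :=
  b ≤ x ∧ ∀ y, b ≤ y → qf M⁻¹ x ≤ qf M⁻¹ y

/-- `I` is the essential index set of `P_M(b)` with solution `btil`. -/
def EssIdx {d : ℕ} (M : Matrix (Fin d) (Fin d) ℝ) (b btil : Fin d → ℝ)
    (I : Finset (Fin d)) : Prop :=
  I.Nonempty ∧
  (∀ i ∈ I, btil i = b i) ∧
  (∃ i ∈ I, b i ≠ 0) ∧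
  (∀ i : ↥I, 0 < wvec M I b i) ∧
  (∀ j, j ∉ I → btil j = rowdot M I b j) ∧
  (∀ j, j ∉ I → b j ≤ btil j)

/-- Sojourn time (Lebesgue measure) of `{s ∈ [0,t] : X s - μ s > c}` (componentwise). -/
def soj {d : ℕ} (X : ℝ → Ω → Fin d → ℝ) (μv c : Fin d → ℝ) (t : ℝ) (ω : Ω) : ℝ≥0∞ :=
  volume {s : ℝ | 0 ≤ s ∧ s ≤ t ∧ ∀ i, c i < X s ω i - μv i * s}

/-- Total sojourn time of `{s ≥ 0 : X s - μ s > c}` (componentwise). -/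
def sojInf {d : ℕ} (X : ℝ → Ω → Fin d → ℝ) (μv c : Fin d → ℝ) (ω : Ω) : ℝ≥0∞ :=
  volume {s : ℝ | 0 ≤ s ∧ ∀ i, c i < X s ω i - μv i * s}

/-- The cumulative Parisian ruin time at level `r` with (vector) initial capital `c`,
valued in `ℝ≥0∞` (equal to `∞` if ruin never occurs):
`τ = inf {t > 0 : ∫₀ᵗ 1(X(s) - μ s > c) ds > r}`. -/
def tauCPR {d : ℕ} (X : ℝ → Ω → Fin d → ℝ) (μv c : Fin d → ℝ) (r : ℝ) (ω : Ω) : ℝ≥0∞ :=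
  sInf {s : ℝ≥0∞ | ∃ t : ℝ, 0 < t ∧ s = ENNReal.ofReal t ∧ ENNReal.ofReal r < soj X μv c t ω}

/-- Sojourn time of the `I`-coordinates of `X(t) - μ t` above the level `x`. -/
def sojI {d : ℕ} (X : ℝ → Ω → Fin d → ℝ) (μv : Fin d → ℝ) (I : Finset (Fin d))
    (x : ↥I → ℝ) (T : ℝ) (ω : Ω) : ℝ≥0∞ :=
  volume {t : ℝ | 0 ≤ t ∧ t ≤ T ∧ ∀ i : ↥I, x i < X t ω i - μv i * t}

/-- `H_I(r,T)` as an extended-real (Lebesgue) integral over `ℝ^I`. -/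
def HIL {d : ℕ} (X : ℝ → Ω → Fin d → ℝ) (μv : Fin d → ℝ) (M : Matrix (Fin d) (Fin d) ℝ)
    (I : Finset (Fin d)) (b : Fin d → ℝ) (t₀ r T : ℝ) : ℝ≥0∞ :=
  ∫⁻ x : ↥I → ℝ, ENNReal.ofReal (Real.exp ((1 / t₀) * (x ⬝ᵥ wvec M I b))) *
    volume {ω | ENNReal.ofReal r < sojI X μv I x T ω}

/-- `H_I(r,T) = ∫_{ℝ^I} exp((1/t₀) x_Iᵀ Σ_{II}⁻¹ b_I) P(∫₀ᵀ 1((X(t)-μt)_I > x_I) dt > r) dx_I`. -/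
def HIrT {d : ℕ} (X : ℝ → Ω → Fin d → ℝ) (μv : Fin d → ℝ) (M : Matrix (Fin d) (Fin d) ℝ)
    (I : Finset (Fin d)) (b : Fin d → ℝ) (t₀ r T : ℝ) : ℝ :=
  (HIL X μv M I b t₀ r T).toReal

/-- `ν` is a centered Gaussian distribution on `k → ℝ` with covariance matrix `D`. -/
def IsCenteredGaussianCov {k : Type*} [Fintype k] (ν : Measure (k → ℝ))
    (D : Matrix k k ℝ) : Prop :=
  IsProbabilityMeasure ν ∧
  ∀ l : k → ℝ, Measure.map (fun y => l ⬝ᵥ y) ν = gaussianReal 0 (Real.toNNReal (l ⬝ᵥ D.mulVec l))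

/-- `ψ(x) = P(Y > c·x)` for `Y ∼ ν` (componentwise; equals `1` if the index type is empty,
which corresponds to the case `K = ∅`). -/
def psiFun {k : Type*} [Fintype k] (ν : Measure (k → ℝ)) (c : k → ℝ) (x : ℝ) : ℝ :=
  (ν {y | ∀ j, c j * x < y j}).toReal

/-- The vector `t₀^{-1/2} (μ_K - Σ_{KI} Σ_{II}⁻¹ μ_I)` appearing in `ψ`. -/
def cvec {d : ℕ} (M : Matrix (Fin d) (Fin d) ℝ) (I K : Finset (Fin d)) (μv : Fin d → ℝ)
    (t₀ : ℝ) : ↥K → ℝ :=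
  fun j => (1 / Real.sqrt t₀) * (μv j - rowdot M I μv j)

/-- `Σ = [[1, ρ],[ρ, 1]]`. -/
def S2 (ρ : ℝ) : Matrix (Fin 2) (Fin 2) ℝ := !![1, ρ; ρ, 1]

/-- `b(t) = α̃ + μ̃ t` for `α̃ = (1,a)`, `μ̃ = (1,m)`. -/
def bvec (a m t : ℝ) : Fin 2 → ℝ := fun i => ![1, a] i + ![1, m] i * t

/-- `g₀(t) = (1/t)(α̃+μ̃t)ᵀΣ⁻¹(α̃+μ̃t)` written out explicitly. -/
def g0fun (ρ a m t : ℝ) : ℝ :=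
  (1 + a ^ 2 - 2 * a * ρ) / ((1 - ρ ^ 2) * t) +
    2 * (1 + a * m - ρ * a - ρ * m) / (1 - ρ ^ 2) +
    (1 + m ^ 2 - 2 * ρ * m) * t / (1 - ρ ^ 2)

/-- `g₁(t) = (1+t)²/t`. -/
def g1fun (t : ℝ) : ℝ := (1 + t) ^ 2 / t

/-- `g₂(t) = (a+mt)²/t`. -/
def g2fun (a m t : ℝ) : ℝ := (a + m * t) ^ 2 / t

/-- The weakly essential index set `K = {j ∈ Iᶜ : Σ_{jI}Σ_{II}⁻¹b_I = b_j}` (as a set). -/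
def Kset (ρ : ℝ) (I : Finset (Fin 2)) (b : Fin 2 → ℝ) : Set (Fin 2) :=
  {j | j ∉ I ∧ rowdot (S2 ρ) I b j = b j}

/-!
Write `Q = Σ⁻¹` and `b(t) = α̃ + μ̃ t`. Whenever `Q b ≥ 0` componentwise, `b` itself solves
`P_Σ(b)`, because `Q(x) - Q(b) = 2 ⟪Q b, x - b⟫ + Q(x - b) ≥ 0` for `x ≥ b`.

At `t₀ = t₀⁽⁰⁾` one has `α̃ᵀ Q α̃ = t₀² μ̃ᵀ Q μ̃`. Testing any `x ≥ b(t)` against the gradient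
`w = Q b(t₀)`, i.e. using `Q(x) ≥ 2 s ⟪w, x⟫ - s² Q(b(t₀))` with `s = (t₀ + t) / (2 t₀)`, gives
`g(t) ≥ κ (t₀ + t)² / (2 t₀ t)` with `κ = ⟪μ̃, w⟫`, while `g(t₀) = 2 κ`. Hence `t₀` is the unique
minimiser as soon as `w > 0`, and both coordinates of `w` are positive because
`ρ < (a + m) / 2` and `a m ≤ 1` (which each of (C1)–(C3) implies).

For `ρ ≥ (a + m) / 2`, the bound `xᵀ Q x ≥ x₁²` gives `g(t) ≥ (1 + t)² / t ≥ 4`, with equality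
only at `t = 1`, where it is attained by `x = (2, 2ρ)`.
-/

lemma unique_min_of_mul_sq_add_div_le {f : ℝ → ℝ} {s c : ℝ} (hc : 0 < c)
    (hfs : f s = 4 * c * s) (hf : ∀ t, 0 < t → c * ((s + t) ^ 2 / t) ≤ f t) :
    (∀ t, 0 < t → f s ≤ f t) ∧ (∀ t, 0 < t → f t = f s → t = s) := by
  have gap : ∀ t, 0 < t → c * ((s + t) ^ 2 / t) = f s + c * ((s - t) ^ 2 / t) := by
    intro t ht
    rw [hfs]
    field_simp
    ring
  refine ⟨fun t ht => ?_, fun t ht heq => ?_⟩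
  · have := gap t ht ▸ hf t ht
    have : 0 ≤ c * ((s - t) ^ 2 / t) := by positivity
    linarith
  · have := gap t ht ▸ heq ▸ hf t ht
    have h0 : c * ((s - t) ^ 2 / t) = 0 := le_antisymm (by linarith) (by positivity)
    simpa [hc.ne', ht.ne', sub_eq_zero, eq_comm] using h0

lemma add_mul_pos_of_sq_balance {p q u v D t : ℝ} (hu : 0 < u) (hv : 0 < v) (hD : 0 < D)
    (ht : 0 < t) (hpq : 0 < v * p + u * q)
    (hbal : t ^ 2 * (q ^ 2 + v ^ 2 * D) = p ^ 2 + u ^ 2 * D) :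
    0 < p + t * q := by
  by_contra! h
  have hdiff : (p - t * q) * (p + t * q) = D * ((t * v - u) * (t * v + u)) := by
    linear_combination -hbal
  rcases le_or_gt 0 q with hq | hq
  · have htv : t * v < u := by nlinarith
    have : 0 ≤ (p - t * q) * (p + t * q) := mul_nonneg_of_nonpos_of_nonpos (by nlinarith) h
    nlinarith [mul_neg_of_neg_of_pos (sub_neg.2 htv) (by positivity : 0 < t * v + u)]
  · have htv : u < t * v := by nlinarith
    have : (p - t * q) * (p + t * q) ≤ 0 := mul_nonpos_of_nonneg_of_nonpos (by nlinarith) h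
    nlinarith [mul_pos (sub_pos.2 htv) (by positivity : 0 < t * v + u)]

lemma iteratedDeriv_two_eq_of_eqOn_Ioi {f : ℝ → ℝ} {A B C x : ℝ} (hx : 0 < x)
    (hf : ∀ t, 0 < t → f t = A / t + B + C * t) : iteratedDeriv 2 f x = 2 * A / x ^ 3 := by
  have hderiv : ∀ t, 0 < t → HasDerivAt f (-A / t ^ 2 + C) t := by
    intro t ht
    have hg := (((hasDerivAt_inv ht.ne').const_mul A).add_const B).add
      ((hasDerivAt_id t).const_mul C)
    refine (hg.congr_of_eventuallyEq ?_).congr_deriv (by field_simp)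
    filter_upwards [eventually_gt_nhds ht] with s hs
    simp [hf s hs, div_eq_mul_inv]
  have hderiv' : deriv f =ᶠ[nhds x] fun t => -A / t ^ 2 + C :=
    (eventually_gt_nhds hx).mono fun t ht => (hderiv t ht).deriv
  have hpow := (((hasDerivAt_pow 2 x).inv (pow_ne_zero 2 hx.ne')).const_mul (-A)).add_const C
  rw [iteratedDeriv_succ, iteratedDeriv_one, hderiv'.deriv_eq]
  convert hpow.deriv using 1
  · simp [div_eq_mul_inv]
  · field_simp
    ring

section QuadraticForm

variable {d : ℕ} {M : Matrix (Fin d) (Fin d) ℝ}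

lemma dotProduct_mulVec_comm_of_isHermitian (hM : M.IsHermitian) (x y : Fin d → ℝ) :
    x ⬝ᵥ M *ᵥ y = y ⬝ᵥ M *ᵥ x := by
  rw [dotProduct_mulVec, ← mulVec_transpose, ← conjTranspose_eq_transpose_of_trivial, hM,
    dotProduct_comm]

lemma qf_sub_smul (hM : M.IsHermitian) (x v : Fin d → ℝ) (s : ℝ) :
    qf M (x - s • v) = qf M x - 2 * s * (x ⬝ᵥ M *ᵥ v) + s ^ 2 * qf M v := by
  simp only [qf, mulVec_sub, mulVec_smul, sub_dotProduct, dotProduct_sub, smul_dotProduct,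
    dotProduct_smul, smul_eq_mul, dotProduct_mulVec_comm_of_isHermitian hM v x]
  ring

lemma two_mul_sub_le_qf (hM : M.PosSemidef) (x v : Fin d → ℝ) (s : ℝ) :
    2 * s * (x ⬝ᵥ M *ᵥ v) - s ^ 2 * qf M v ≤ qf M x := by
  have := hM.dotProduct_mulVec_nonneg (x - s • v)
  rw [star_trivial, ← qf, qf_sub_smul hM.1] at this
  linarith

lemma qf_le_qf_of_le (hM : M.PosSemidef) {b x : Fin d → ℝ} (hw : 0 ≤ M *ᵥ b) (hbx : b ≤ x) :
    qf M b ≤ qf M x := by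
  have hgrad : b ⬝ᵥ M *ᵥ b ≤ x ⬝ᵥ M *ᵥ b := by
    rw [← sub_nonneg, ← sub_dotProduct]
    exact dotProduct_nonneg_of_nonneg (sub_nonneg.2 hbx) hw
  have := two_mul_sub_le_qf hM x b 1
  rw [qf] at this ⊢
  linarith

end QuadraticForm

section ValueFunction

variable {d : ℕ} {S : Matrix (Fin d) (Fin d) ℝ} {α μ : Fin d → ℝ} {t : ℝ}

lemma gfun_eq_of_minimizes {x : Fin d → ℝ} (h : Minimizes S (fun i => α i + μ i * t) x) :
    gfun S α μ t = qf S⁻¹ x / t := by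
  have hleast : IsLeast ((fun y => qf S⁻¹ y) '' {y | ∀ i, α i + μ i * t ≤ y i}) (qf S⁻¹ x) :=
    ⟨⟨x, h.1, rfl⟩, by rintro _ ⟨y, hy, rfl⟩; exact h.2 y hy⟩
  rw [gfun, hleast.csInf_eq, one_div_mul_eq_div]

lemma div_le_gfun (ht : 0 < t) {c : ℝ}
    (h : ∀ x, (fun i => α i + μ i * t) ≤ x → c ≤ qf S⁻¹ x) : c / t ≤ gfun S α μ t := by
  rw [gfun, ← one_div_mul_eq_div]
  gcongr
  exact le_csInf ⟨_, _, fun i => le_rfl, rfl⟩ (by rintro _ ⟨x, hx, rfl⟩; exact h x hx)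

lemma minimizes_self (hS : S⁻¹.PosSemidef) {b : Fin d → ℝ} (hw : 0 ≤ S⁻¹ *ᵥ b) :
    Minimizes S b b :=
  ⟨le_rfl, fun _ hy => qf_le_qf_of_le hS hw hy⟩

end ValueFunction

section BalancedPath

variable {d : ℕ} {S : Matrix (Fin d) (Fin d) ℝ} {α μ : Fin d → ℝ} {t₀ : ℝ}

lemma path_eq_add_smul (α μ : Fin d → ℝ) (t : ℝ) : (fun i => α i + μ i * t) = α + t • μ := by
  ext i
  simp [mul_comm]

lemma path_dotProduct_of_balanced (hS : S⁻¹.IsHermitian) (hbal : qf S⁻¹ α = t₀ ^ 2 * qf S⁻¹ μ)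
    (t : ℝ) : (α + t • μ) ⬝ᵥ S⁻¹ *ᵥ (α + t₀ • μ) = (t₀ + t) * (μ ⬝ᵥ S⁻¹ *ᵥ (α + t₀ • μ)) := by
  simp only [qf] at hbal
  simp only [add_dotProduct, smul_dotProduct, mulVec_add, mulVec_smul, dotProduct_add,
    dotProduct_smul, smul_eq_mul, dotProduct_mulVec_comm_of_isHermitian hS α μ]
  linear_combination hbal

theorem gfun_unique_min_of_balanced (hS : S⁻¹.PosSemidef) (ht₀ : 0 < t₀)
    (hbal : qf S⁻¹ α = t₀ ^ 2 * qf S⁻¹ μ) (hw : 0 ≤ S⁻¹ *ᵥ fun i => α i + μ i * t₀)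
    (hK : 0 < μ ⬝ᵥ S⁻¹ *ᵥ fun i => α i + μ i * t₀) :
    (∀ t, 0 < t → gfun S α μ t₀ ≤ gfun S α μ t) ∧
      (∀ t, 0 < t → gfun S α μ t = gfun S α μ t₀ → t = t₀) := by
  rw [path_eq_add_smul] at hw hK
  set K := μ ⬝ᵥ S⁻¹ *ᵥ (α + t₀ • μ)
  have hdot := path_dotProduct_of_balanced hS.1 hbal
  have hqf : qf S⁻¹ (α + t₀ • μ) = 2 * t₀ * K := by rw [qf, hdot]; ring
  refine unique_min_of_mul_sq_add_div_le (c := K / (2 * t₀)) (by positivity) ?_ ?_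
  · have hmin : Minimizes S (fun i => α i + μ i * t₀) (α + t₀ • μ) := by
      rw [path_eq_add_smul]; exact minimizes_self hS hw
    rw [gfun_eq_of_minimizes hmin, hqf]
    field_simp
    ring
  · intro t ht
    calc K / (2 * t₀) * ((t₀ + t) ^ 2 / t) = K * (t₀ + t) ^ 2 / (2 * t₀) / t := by ring
      _ ≤ gfun S α μ t := div_le_gfun ht fun x hx => ?_
    rw [path_eq_add_smul] at hx
    have hgrad : (α + t • μ) ⬝ᵥ S⁻¹ *ᵥ (α + t₀ • μ) ≤ x ⬝ᵥ S⁻¹ *ᵥ (α + t₀ • μ) := by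
      rw [← sub_nonneg, ← sub_dotProduct]
      exact dotProduct_nonneg_of_nonneg (sub_nonneg.2 hx) hw
    rw [hdot] at hgrad
    set s := (t₀ + t) / (2 * t₀)
    have hs : 0 ≤ s := by positivity
    calc K * (t₀ + t) ^ 2 / (2 * t₀) = 2 * s * ((t₀ + t) * K) - s ^ 2 * (2 * t₀ * K) := by
          simp only [s]; field_simp; ring
      _ ≤ 2 * s * (x ⬝ᵥ S⁻¹ *ᵥ (α + t₀ • μ)) - s ^ 2 * qf S⁻¹ (α + t₀ • μ) := by
          rw [hqf]; gcongr
      _ ≤ qf S⁻¹ x := two_mul_sub_le_qf hS x _ s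

end BalancedPath

section EssentialIndexSet

variable {d : ℕ} (M : Matrix (Fin d) (Fin d) ℝ) (b : Fin d → ℝ)

lemma wvec_univ (i : ↥(Finset.univ : Finset (Fin d))) : wvec M Finset.univ b i = (M⁻¹ *ᵥ b) i := by
  let e : ↥(Finset.univ : Finset (Fin d)) ≃ Fin d := Equiv.subtypeUnivEquiv Finset.mem_univ
  have hsub : sub M Finset.univ Finset.univ = M.submatrix e e := rfl
  rw [wvec, hsub, inv_submatrix_equiv, mulVec, mulVec, dotProduct, dotProduct]
  exact Fintype.sum_equiv e _ _ fun j => rfl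

lemma subQF_univ : subQF M Finset.univ b = qf M⁻¹ b := by
  rw [subQF, qf, dotProduct, dotProduct]
  exact Fintype.sum_equiv (Equiv.subtypeUnivEquiv Finset.mem_univ) _ _
    fun i => by rw [wvec_univ]; rfl

lemma essIdx_univ (hb : b ≠ 0) (hw : ∀ i, 0 < (M⁻¹ *ᵥ b) i) : EssIdx M b b Finset.univ := by
  obtain ⟨i, hi⟩ := Function.ne_iff.1 hb
  exact ⟨⟨i, Finset.mem_univ i⟩, fun _ _ => rfl, ⟨i, Finset.mem_univ i, hi⟩,
    fun i => wvec_univ M b i ▸ hw i, fun j hj => absurd (Finset.mem_univ j) hj,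
    fun j hj => absurd (Finset.mem_univ j) hj⟩

variable {M} {i : Fin d}

lemma wvec_singleton (hM : M i i = 1) (k : ↥({i} : Finset (Fin d))) : wvec M {i} b k = b i := by
  have hsub : sub M {i} {i} = 1 := by
    ext ⟨k, hk⟩ ⟨l, hl⟩
    rw [Finset.mem_singleton] at hk hl
    subst hk hl
    exact hM.trans (one_apply_eq _).symm
  obtain ⟨k, hk⟩ := k
  rw [Finset.mem_singleton] at hk
  subst hk
  simp [wvec, hsub, subv]

lemma rowdot_singleton (hM : M i i = 1) (j : Fin d) : rowdot M {i} b j = M j i * b i := by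
  simp [rowdot, wvec_singleton b hM]

lemma subQF_singleton (hM : M i i = 1) : subQF M {i} b = b i ^ 2 := by
  simp [subQF, dotProduct, wvec_singleton b hM, subv, sq]

end EssentialIndexSet

section TwoByTwo

variable {ρ : ℝ}

lemma S2_inv (hρ : ρ ^ 2 < 1) : (S2 ρ)⁻¹ = (1 - ρ ^ 2)⁻¹ • !![1, -ρ; -ρ, 1] := by
  have hD : 1 - ρ ^ 2 ≠ 0 := by linarith
  refine inv_eq_right_inv ?_
  ext i j
  fin_cases i <;> fin_cases j <;> simp [S2, mul_apply, Fin.sum_univ_two] <;> field_simp <;> ring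

lemma S2_inv_mulVec (hρ : ρ ^ 2 < 1) (b : Fin 2 → ℝ) :
    (S2 ρ)⁻¹ *ᵥ b = ![(b 0 - ρ * b 1) / (1 - ρ ^ 2), (b 1 - ρ * b 0) / (1 - ρ ^ 2)] := by
  ext i
  fin_cases i <;> simp [S2_inv hρ, mulVec, dotProduct, Fin.sum_univ_two] <;> ring

lemma qf_S2_inv (hρ : ρ ^ 2 < 1) (x : Fin 2 → ℝ) :
    qf (S2 ρ)⁻¹ x = (x 0 ^ 2 - 2 * ρ * x 0 * x 1 + x 1 ^ 2) / (1 - ρ ^ 2) := by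
  simp only [qf, S2_inv_mulVec hρ, dotProduct, Fin.sum_univ_two, cons_val_zero, cons_val_one]
  ring

lemma sq_le_qf_S2_inv (hρ : ρ ^ 2 < 1) (x : Fin 2 → ℝ) : x 0 ^ 2 ≤ qf (S2 ρ)⁻¹ x := by
  rw [qf_S2_inv hρ, le_div_iff₀ (by linarith)]
  nlinarith [sq_nonneg (x 1 - ρ * x 0)]

lemma posSemidef_S2_inv (hρ : ρ ^ 2 < 1) : (S2 ρ)⁻¹.PosSemidef := by
  refine .of_dotProduct_mulVec_nonneg ?_ fun x => ?_
  · rw [S2_inv hρ]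
    ext i j
    fin_cases i <;> fin_cases j <;> simp
  · rw [star_trivial, ← qf]
    exact (sq_nonneg _).trans (sq_le_qf_S2_inv hρ x)

lemma qf_S2_inv_diagonal (hρ : ρ ^ 2 < 1) (c : ℝ) : qf (S2 ρ)⁻¹ ![c, ρ * c] = c ^ 2 := by
  have hD : 1 - ρ ^ 2 ≠ 0 := by linarith
  rw [qf_S2_inv hρ, div_eq_iff hD]
  simp only [cons_val_zero, cons_val_one]
  ring

lemma minimizes_S2_of_le (hρ : ρ ^ 2 < 1) {b : Fin 2 → ℝ} (hb0 : 0 ≤ b 0) (hb1 : b 1 ≤ ρ * b 0) :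
    Minimizes (S2 ρ) b ![b 0, ρ * b 0] := by
  refine ⟨fun i => ?_, fun y hy => ?_⟩
  · fin_cases i
    · simp
    · simpa using hb1
  · rw [qf_S2_inv_diagonal hρ]
    exact (pow_le_pow_left₀ hb0 (hy 0) 2).trans (sq_le_qf_S2_inv hρ y)

lemma essIdx_S2_zero {b : Fin 2 → ℝ} (hb0 : 0 < b 0) (hb1 : b 1 ≤ ρ * b 0) :
    EssIdx (S2 ρ) b ![b 0, ρ * b 0] {0} := by
  have h00 : S2 ρ 0 0 = 1 := rfl
  refine ⟨Finset.singleton_nonempty 0, by simp, ⟨0, Finset.mem_singleton_self 0, hb0.ne'⟩,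
    fun k => wvec_singleton b h00 k ▸ hb0, fun j hj => ?_, fun j hj => ?_⟩
  all_goals
    obtain rfl : j = 1 := by fin_cases j <;> simp_all
  · rw [rowdot_singleton b h00]
    simp [S2]
  · simpa using hb1

lemma mem_Kset_zero {b : Fin 2 → ℝ} {j : Fin 2} : j ∈ Kset ρ {0} b ↔ j = 1 ∧ ρ * b 0 = b 1 := by
  have h00 : S2 ρ 0 0 = 1 := rfl
  simp only [Kset, Set.mem_ofPred_eq, rowdot_singleton b h00]
  fin_cases j <;> simp [S2]

end TwoByTwo

section Model

variable {ρ a m : ℝ}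

lemma bvec_eq (t : ℝ) : bvec a m t = ![1 + t, a + m * t] := by
  ext i
  fin_cases i <;> simp [bvec]

lemma g0fun_eq_qf_div (hρ : ρ ^ 2 < 1) {t : ℝ} (ht : t ≠ 0) :
    g0fun ρ a m t = qf (S2 ρ)⁻¹ (bvec a m t) / t := by
  have hD : 1 - ρ ^ 2 ≠ 0 := by linarith
  rw [qf_S2_inv hρ, bvec_eq, g0fun]
  field_simp
  simp only [cons_val_zero, cons_val_one]
  ring

lemma iteratedDeriv_two_g0fun (hρ : ρ ^ 2 < 1) {t : ℝ} (ht : 0 < t) :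
    iteratedDeriv 2 (g0fun ρ a m) t = 2 / t ^ 3 * qf (S2 ρ)⁻¹ ![1, a] := by
  have hform : ∀ s, 0 < s → g0fun ρ a m s = (1 + a ^ 2 - 2 * a * ρ) / (1 - ρ ^ 2) / s +
      2 * (1 + a * m - ρ * a - ρ * m) / (1 - ρ ^ 2) + (1 + m ^ 2 - 2 * ρ * m) / (1 - ρ ^ 2) * s :=
    fun s _ => by rw [g0fun, div_div, div_mul_eq_mul_div]
  rw [iteratedDeriv_two_eq_of_eqOn_Ioi ht hform, qf_S2_inv hρ]
  simp only [cons_val_zero, cons_val_one]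
  ring

lemma qf_S2_inv_balance (hρ : ρ ^ 2 < 1) {t : ℝ}
    (hbal : t ^ 2 * (1 + m ^ 2 - 2 * m * ρ) = 1 + a ^ 2 - 2 * a * ρ) :
    qf (S2 ρ)⁻¹ ![1, a] = t ^ 2 * qf (S2 ρ)⁻¹ ![1, m] := by
  simp only [qf_S2_inv hρ, cons_val_zero, cons_val_one]
  rw [← mul_div_assoc]
  congr 1
  linear_combination -hbal

lemma S2_inv_mulVec_bvec_pos (hρ : ρ ^ 2 < 1) (ha : 0 < a) (hm : 0 < m) (hρam : 2 * ρ < a + m)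
    (ham : a * m ≤ 1) {t : ℝ} (ht : 0 < t)
    (hbal : t ^ 2 * (1 + m ^ 2 - 2 * m * ρ) = 1 + a ^ 2 - 2 * a * ρ) (i : Fin 2) :
    0 < ((S2 ρ)⁻¹ *ᵥ bvec a m t) i := by
  have hD : 0 < 1 - ρ ^ 2 := by linarith
  rw [S2_inv_mulVec hρ, bvec_eq]
  fin_cases i <;> simp only [Fin.zero_eta, Fin.mk_one, cons_val_zero, cons_val_one]
    <;> refine div_pos ?_ hD
  -- `1 + c ^ 2 - 2 * c * ρ = (1 - ρ * c) ^ 2 + c ^ 2 * (1 - ρ ^ 2) = (c - ρ) ^ 2 + (1 - ρ ^ 2)`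
  · have : 0 < (1 - ρ * a) + t * (1 - ρ * m) := by
      refine add_mul_pos_of_sq_balance ha hm hD ht ?_ (by linear_combination hbal)
      rcases le_or_gt ρ 0 with hρ0 | hρ0
      · nlinarith [mul_pos ha hm]
      · nlinarith [mul_lt_mul_of_pos_right hρam (mul_pos ha hm),
          mul_le_mul_of_nonneg_left ham (by linarith : 0 ≤ a + m)]
    linarith
  · have : 0 < (a - ρ) + t * (m - ρ) :=
      add_mul_pos_of_sq_balance one_pos one_pos hD ht (by linarith) (by linear_combination hbal)
    linarith

theorem unique_min_and_essIdx_univ_of_balanced {t₀ : ℝ} (hρ : ρ ^ 2 < 1) (ha : 0 < a)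
    (hm : 0 < m) (hρam : 2 * ρ < a + m) (ham : a * m ≤ 1) (ht₀ : 0 < t₀)
    (hbal : t₀ ^ 2 * (1 + m ^ 2 - 2 * m * ρ) = 1 + a ^ 2 - 2 * a * ρ) :
    ((∀ t, 0 < t → gfun (S2 ρ) ![1, a] ![1, m] t₀ ≤ gfun (S2 ρ) ![1, a] ![1, m] t) ∧
      (∀ t, 0 < t → gfun (S2 ρ) ![1, a] ![1, m] t = gfun (S2 ρ) ![1, a] ![1, m] t₀ → t = t₀)) ∧
    Minimizes (S2 ρ) (bvec a m t₀) (bvec a m t₀) ∧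
    EssIdx (S2 ρ) (bvec a m t₀) (bvec a m t₀) Finset.univ := by
  have hw := S2_inv_mulVec_bvec_pos hρ ha hm hρam ham ht₀ hbal
  have hK : 0 < ![1, m] ⬝ᵥ (S2 ρ)⁻¹ *ᵥ bvec a m t₀ := by
    simpa [dotProduct, Fin.sum_univ_two] using add_pos (hw 0) (mul_pos hm (hw 1))
  have hb : bvec a m t₀ ≠ 0 := Function.ne_iff.2 ⟨0, by simp [bvec_eq]; positivity⟩
  exact ⟨gfun_unique_min_of_balanced (posSemidef_S2_inv hρ) ht₀ (qf_S2_inv_balance hρ hbal)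
      (fun i => (hw i).le) hK,
    minimizes_self (posSemidef_S2_inv hρ) fun i => (hw i).le, essIdx_univ _ _ hb hw⟩

lemma bvec_one_zero : bvec a m 1 0 = 2 := by
  rw [bvec_eq]; norm_num

lemma bvec_one_one : bvec a m 1 1 = a + m := by
  simp [bvec_eq]

lemma minimizes_essIdx_bvec_one (hρ : ρ ^ 2 < 1) (hab : a + m ≤ 2 * ρ) :
    Minimizes (S2 ρ) (bvec a m 1) ![2, ρ * 2] ∧ EssIdx (S2 ρ) (bvec a m 1) ![2, ρ * 2] {0} := by
  have hb0 : 0 < bvec a m 1 0 := by rw [bvec_one_zero]; norm_num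
  have hb1 : bvec a m 1 1 ≤ ρ * bvec a m 1 0 := by rw [bvec_one_zero, bvec_one_one]; linarith
  have h := And.intro (minimizes_S2_of_le hρ hb0.le hb1) (essIdx_S2_zero hb0 hb1)
  rwa [bvec_one_zero] at h

lemma gfun_one_eq_four (hρ : ρ ^ 2 < 1) (hab : a + m ≤ 2 * ρ) :
    gfun (S2 ρ) ![1, a] ![1, m] 1 = 4 := by
  rw [gfun_eq_of_minimizes (minimizes_essIdx_bvec_one hρ hab).1, qf_S2_inv_diagonal hρ]
  norm_num

lemma gfun_unique_min_at_one (hρ : ρ ^ 2 < 1) (hab : a + m ≤ 2 * ρ) :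
    (∀ t, 0 < t → gfun (S2 ρ) ![1, a] ![1, m] 1 ≤ gfun (S2 ρ) ![1, a] ![1, m] t) ∧
      (∀ t, 0 < t → gfun (S2 ρ) ![1, a] ![1, m] t = gfun (S2 ρ) ![1, a] ![1, m] 1 → t = 1) := by
  refine unique_min_of_mul_sq_add_div_le one_pos (by rw [gfun_one_eq_four hρ hab]; norm_num)
    fun t ht => ?_
  rw [one_mul]
  refine div_le_gfun ht fun x hx => ?_
  have hx0 : 1 + t ≤ x 0 := by simpa using hx 0
  exact (pow_le_pow_left₀ (by linarith) hx0 2).trans (sq_le_qf_S2_inv hρ x)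

lemma iteratedDeriv_two_g1fun_one : iteratedDeriv 2 g1fun 1 = 2 := by
  rw [iteratedDeriv_two_eq_of_eqOn_Ioi (A := 1) (B := 2) (C := 1) one_pos fun t ht => by
    rw [g1fun]; field_simp; ring]
  norm_num

end Model

/-- Lemma 6.1 / Corollary 6.3 (i): the minimiser of `g`, the essential and
weakly essential index sets and the constants `ĝ`, `g̃` for the auxiliary two-dimensional model
under conditions (i.C1)–(i.C3). -/
theorem stmt_12 (ρ a m : ℝ) (ha : 0 < a) (hm : 0 < m) (hρ₁ : -1 < ρ) (hρ₂ : ρ < 1)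
    (hC : (m < 1 ∧ a < 1) ∨ (m < 1 ∧ 1 ≤ a ∧ m ≤ 1 / a) ∨ (1 ≤ m ∧ a < 1 ∧ m ≤ 1 / a)) :
    (ρ < (a + m) / 2 →
      (∀ t : ℝ, 0 < t →
        gfun (S2 ρ) ![1, a] ![1, m] (Real.sqrt ((1 + a ^ 2 - 2 * a * ρ) / (1 + m ^ 2 - 2 * m * ρ)))
          ≤ gfun (S2 ρ) ![1, a] ![1, m] t) ∧
      (∀ t : ℝ, 0 < t →
        gfun (S2 ρ) ![1, a] ![1, m] t
            = gfun (S2 ρ) ![1, a] ![1, m]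
                (Real.sqrt ((1 + a ^ 2 - 2 * a * ρ) / (1 + m ^ 2 - 2 * m * ρ))) →
        t = Real.sqrt ((1 + a ^ 2 - 2 * a * ρ) / (1 + m ^ 2 - 2 * m * ρ))) ∧
      (∃ btil : Fin 2 → ℝ,
        Minimizes (S2 ρ) (bvec a m (Real.sqrt ((1 + a ^ 2 - 2 * a * ρ) / (1 + m ^ 2 - 2 * m * ρ)))) btil ∧
        EssIdx (S2 ρ) (bvec a m (Real.sqrt ((1 + a ^ 2 - 2 * a * ρ) / (1 + m ^ 2 - 2 * m * ρ)))) btil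
          (Finset.univ : Finset (Fin 2))) ∧
      Kset ρ Finset.univ (bvec a m (Real.sqrt ((1 + a ^ 2 - 2 * a * ρ) / (1 + m ^ 2 - 2 * m * ρ)))) = ∅ ∧
      gfun (S2 ρ) ![1, a] ![1, m] (Real.sqrt ((1 + a ^ 2 - 2 * a * ρ) / (1 + m ^ 2 - 2 * m * ρ)))
        = g0fun ρ a m (Real.sqrt ((1 + a ^ 2 - 2 * a * ρ) / (1 + m ^ 2 - 2 * m * ρ))) ∧
      2 / Real.sqrt ((1 + a ^ 2 - 2 * a * ρ) / (1 + m ^ 2 - 2 * m * ρ)) ^ 3 *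
          subQF (S2 ρ) Finset.univ ![1, a]
        = iteratedDeriv 2 (g0fun ρ a m)
            (Real.sqrt ((1 + a ^ 2 - 2 * a * ρ) / (1 + m ^ 2 - 2 * m * ρ)))) ∧
    (ρ = (a + m) / 2 →
      Real.sqrt ((1 + a ^ 2 - 2 * a * ρ) / (1 + m ^ 2 - 2 * m * ρ)) = 1 ∧
      (∀ t : ℝ, 0 < t → gfun (S2 ρ) ![1, a] ![1, m] 1 ≤ gfun (S2 ρ) ![1, a] ![1, m] t) ∧
      (∀ t : ℝ, 0 < t → gfun (S2 ρ) ![1, a] ![1, m] t = gfun (S2 ρ) ![1, a] ![1, m] 1 → t = 1) ∧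
      (∃ btil : Fin 2 → ℝ,
        Minimizes (S2 ρ) (bvec a m 1) btil ∧
        EssIdx (S2 ρ) (bvec a m 1) btil ({0} : Finset (Fin 2))) ∧
      Kset ρ ({0} : Finset (Fin 2)) (bvec a m 1) = {1} ∧
      gfun (S2 ρ) ![1, a] ![1, m] 1 = 4 ∧ g0fun ρ a m 1 = 4 ∧ g1fun 1 = 4 ∧
      2 / (1 : ℝ) ^ 3 * subQF (S2 ρ) ({0} : Finset (Fin 2)) ![1, a] = 2 ∧
      iteratedDeriv 2 g1fun 1 = 2) ∧
    ((a + m) / 2 < ρ →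
      (∀ t : ℝ, 0 < t → gfun (S2 ρ) ![1, a] ![1, m] 1 ≤ gfun (S2 ρ) ![1, a] ![1, m] t) ∧
      (∀ t : ℝ, 0 < t → gfun (S2 ρ) ![1, a] ![1, m] t = gfun (S2 ρ) ![1, a] ![1, m] 1 → t = 1) ∧
      (∃ btil : Fin 2 → ℝ,
        Minimizes (S2 ρ) (bvec a m 1) btil ∧
        EssIdx (S2 ρ) (bvec a m 1) btil ({0} : Finset (Fin 2))) ∧
      Kset ρ ({0} : Finset (Fin 2)) (bvec a m 1) = ∅ ∧
      gfun (S2 ρ) ![1, a] ![1, m] 1 = 4 ∧ g1fun 1 = 4 ∧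
      2 / (1 : ℝ) ^ 3 * subQF (S2 ρ) ({0} : Finset (Fin 2)) ![1, a] = 2 ∧
      iteratedDeriv 2 g1fun 1 = 2) := by
  have hρ : ρ ^ 2 < 1 := by nlinarith
  have hpos : ∀ c, 0 < 1 + c ^ 2 - 2 * c * ρ := fun c => by nlinarith [sq_nonneg (c - ρ)]
  refine ⟨fun hρam => ?_, fun hρam => ?_, fun hρam => ?_⟩
  · have ham : a * m ≤ 1 := by
      rcases hC with ⟨hm1, ha1⟩ | ⟨-, -, h⟩ | ⟨-, -, h⟩
      · nlinarith
      all_goals rwa [le_div_iff₀ ha, mul_comm] at h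
    set t₀ := Real.sqrt ((1 + a ^ 2 - 2 * a * ρ) / (1 + m ^ 2 - 2 * m * ρ))
    have ht₀ : 0 < t₀ := Real.sqrt_pos.2 (div_pos (hpos a) (hpos m))
    have hbal : t₀ ^ 2 * (1 + m ^ 2 - 2 * m * ρ) = 1 + a ^ 2 - 2 * a * ρ := by
      rw [Real.sq_sqrt (div_pos (hpos a) (hpos m)).le, div_mul_cancel₀ _ (hpos m).ne']
    obtain ⟨⟨hle, huniq⟩, hmin, hess⟩ :=
      unique_min_and_essIdx_univ_of_balanced hρ ha hm (by linarith) ham ht₀ hbal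
    refine ⟨hle, huniq, ⟨_, hmin, hess⟩, by ext j; simp [Kset], ?_, ?_⟩
    · rw [gfun_eq_of_minimizes hmin, g0fun_eq_qf_div hρ ht₀.ne']
    · rw [subQF_univ, iteratedDeriv_two_g0fun hρ ht₀]
  · have hab : a + m ≤ 2 * ρ := by linarith
    have hsqrt : Real.sqrt ((1 + a ^ 2 - 2 * a * ρ) / (1 + m ^ 2 - 2 * m * ρ)) = 1 := by
      rw [show 1 + a ^ 2 - 2 * a * ρ = 1 + m ^ 2 - 2 * m * ρ by rw [hρam]; ring,
        div_self (hpos m).ne', Real.sqrt_one]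
    have hg0 : g0fun ρ a m 1 = 4 := by
      rw [g0fun_eq_qf_div hρ one_ne_zero, qf_S2_inv hρ, bvec_one_zero, bvec_one_one,
        div_one, div_eq_iff (by linarith), hρam]
      ring
    have hK : Kset ρ {0} (bvec a m 1) = {1} := by
      ext j
      rw [mem_Kset_zero, bvec_one_zero, bvec_one_one, hρam]
      simp
    exact ⟨hsqrt, (gfun_unique_min_at_one hρ hab).1, (gfun_unique_min_at_one hρ hab).2,
      ⟨_, minimizes_essIdx_bvec_one hρ hab⟩, hK, gfun_one_eq_four hρ hab, hg0,
      by norm_num [g1fun], by rw [subQF_singleton _ rfl]; norm_num, iteratedDeriv_two_g1fun_one⟩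
  · have hab : a + m ≤ 2 * ρ := by linarith
    have hK : Kset ρ {0} (bvec a m 1) = ∅ := by
      ext j
      rw [mem_Kset_zero, bvec_one_zero, bvec_one_one]
      simp only [Set.mem_empty_iff_false, iff_false, not_and]
      exact fun _ => by linarith
    exact ⟨(gfun_unique_min_at_one hρ hab).1, (gfun_unique_min_at_one hρ hab).2,
      ⟨_, minimizes_essIdx_bvec_one hρ hab⟩, hK, gfun_one_eq_four hρ hab,
      by norm_num [g1fun], by rw [subQF_singleton _ rfl]; norm_num, iteratedDeriv_two_g1fun_one⟩
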